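/- arXiv:2402.14754 — 2 statements merged into one kernel-verified Lean document; each statement's English description precedes it below -/
import Mathlib

section
/- Let n ≥ 1 and let 0 ≤ i ≤ n be integers. If λ is a Young diagram with ht(λ) = 2n − 1 or ht(λ) = 2n, then mult(λ, 2n − i) = mult(λ, i). -/
open scoped Classical

namespace YoungDiagram

/-- `lam / μ` is a vertical strip of length `k`: `μ ⊆ lam`, the complement consists of
exactly `k` boxes, and no two boxes of the complement lie in the same row. -/
def IsVerticalStrip (μ lam : YoungDiagram) (k : ℕ) : Prop :=
  μ ≤ lam ∧ (lam.cells \ μ.cells).card = k ∧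
    ∀ c₁ ∈ lam.cells \ μ.cells, ∀ c₂ ∈ lam.cells \ μ.cells, c₁.1 = c₂.1 → c₁ = c₂

/-- Every column of `μ` has even length. -/
def HasEvenColumns (μ : YoungDiagram) : Prop := ∀ j, Even (μ.colLen j)

/-- `mult lam k` is the number of subdiagrams `μ ⊆ lam` with even columns such that
`lam / μ` is a vertical strip of length `k`. -/
noncomputable def mult (lam : YoungDiagram) (k : ℕ) : ℕ :=
  Nat.card {μ : YoungDiagram // μ ≤ lam ∧ μ.HasEvenColumns ∧ IsVerticalStrip μ lam k}

/-- The height of a Young diagram: the number of nonempty rows. -/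
def ht (lam : YoungDiagram) : ℕ := lam.colLen 0

/-- A Young diagram is mildly odd if for every odd `m` it has at most one column
of length exactly `m`. -/
def MildlyOdd (lam : YoungDiagram) : Prop :=
  ∀ m : ℕ, Odd m → ∀ j₁ j₂ : ℕ, lam.colLen j₁ = m → lam.colLen j₂ = m → j₁ = j₂

/-- The number of columns of odd length. -/
noncomputable def oddColumns (lam : YoungDiagram) : ℕ :=
  ((Finset.range (lam.rowLen 0)).filter fun j => Odd (lam.colLen j)).card

/-- The profile of a Young diagram: for the distinct nonzero row lengths
`ℓ₀ > ℓ₁ > … > ℓₙ`, the list of multiplicities `hᵢ = #{rows of length ℓᵢ}`. -/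
noncomputable def profile (lam : YoungDiagram) : List ℕ :=
  lam.rowLens.dedup.map fun ℓ => lam.rowLens.count ℓ

/-- Every entry of the profile is even. -/
def HasEvenProfile (lam : YoungDiagram) : Prop := ∀ h ∈ lam.profile, Even h

end YoungDiagram

namespace YoungDiagram

lemma colLen_mono' {μ ν : YoungDiagram} (h : μ ≤ ν) (j : ℕ) : μ.colLen j ≤ ν.colLen j := by
  by_contra hc
  push_neg at hc
  have h2 : (ν.colLen j, j) ∈ μ := mem_iff_lt_colLen.2 hc
  exact absurd (mem_iff_lt_colLen.1 (h h2)) (lt_irrefl _)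

lemma rowLen_mono' {μ ν : YoungDiagram} (h : μ ≤ ν) (i : ℕ) : μ.rowLen i ≤ ν.rowLen i := by
  by_contra hc
  push_neg at hc
  have h2 : (i, ν.rowLen i) ∈ μ := mem_iff_lt_rowLen.2 hc
  exact absurd (mem_iff_lt_rowLen.1 (h h2)) (lt_irrefl _)

lemma le_of_colLen_le {μ ν : YoungDiagram} (h : ∀ j, μ.colLen j ≤ ν.colLen j) : μ ≤ ν := by
  intro c hc
  obtain ⟨i, j⟩ := c
  exact mem_iff_lt_colLen.2 (lt_of_lt_of_le (mem_iff_lt_colLen.1 hc) (h j))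

lemma eq_of_colLen_eq {μ ν : YoungDiagram} (h : ∀ j, μ.colLen j = ν.colLen j) : μ = ν :=
  le_antisymm (le_of_colLen_le fun j => (h j).le) (le_of_colLen_le fun j => (h j).ge)

lemma colLen_eq_zero' (μ : YoungDiagram) {j : ℕ} (h : μ.rowLen 0 ≤ j) : μ.colLen j = 0 := by
  by_contra hc
  have : (0, j) ∈ μ := mem_iff_lt_colLen.2 (Nat.pos_of_ne_zero hc)
  exact absurd (mem_iff_lt_rowLen.1 this) (not_lt.2 h)

lemma cells_eq_biUnion (μ : YoungDiagram) {N : ℕ} (hN : μ.rowLen 0 ≤ N) :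
    μ.cells = (Finset.range N).biUnion (fun j => μ.col j) := by
  ext ⟨i, j⟩
  simp only [Finset.mem_biUnion, Finset.mem_range, mem_col_iff, mem_cells]
  constructor
  · intro h
    refine ⟨j, ?_, h, rfl⟩
    have h0 : (0, j) ∈ μ := μ.up_left_mem (Nat.zero_le i) le_rfl h
    exact lt_of_lt_of_le (mem_iff_lt_rowLen.1 h0) hN
  · rintro ⟨j', _, h, rfl⟩
    exact h

lemma card_cells_eq (μ : YoungDiagram) {N : ℕ} (hN : μ.rowLen 0 ≤ N) :
    μ.cells.card = ∑ j ∈ Finset.range N, μ.colLen j := by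
  rw [cells_eq_biUnion μ hN, Finset.card_biUnion]
  · exact Finset.sum_congr rfl fun j _ => (μ.colLen_eq_card (j := j)).symm
  · intro a _ b _ hab
    simp only [Finset.disjoint_left, mem_col_iff]
    rintro ⟨i, j⟩ ⟨_, rfl⟩ ⟨_, rfl⟩
    exact hab rfl

lemma noTwo_iff {μ lam : YoungDiagram} :
    (∀ c₁ ∈ lam.cells \ μ.cells, ∀ c₂ ∈ lam.cells \ μ.cells, c₁.1 = c₂.1 → c₁ = c₂)
      ↔ ∀ j, lam.colLen (j + 1) ≤ μ.colLen j := by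
  constructor
  · intro h j
    by_contra hc
    push_neg at hc
    set i := μ.colLen j with hi
    have h1 : (i, j + 1) ∈ lam := mem_iff_lt_colLen.2 hc
    have h2 : (i, j) ∉ μ := fun hm => absurd (mem_iff_lt_colLen.1 hm) (lt_irrefl _)
    have h3 : (i, j) ∈ lam := lam.up_left_mem le_rfl (Nat.le_succ j) h1
    have h4 : (i, j + 1) ∉ μ := fun hm => h2 (μ.up_left_mem le_rfl (Nat.le_succ j) hm)
    have m1 : (i, j) ∈ lam.cells \ μ.cells := by
      simp [Finset.mem_sdiff, mem_cells, h3, h2]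
    have m2 : (i, j + 1) ∈ lam.cells \ μ.cells := by
      simp [Finset.mem_sdiff, mem_cells, h1, h4]
    have := h _ m1 _ m2 rfl
    simp at this
  · intro h
    have key : ∀ i j₁ j₂, j₁ < j₂ → (i, j₁) ∈ lam.cells \ μ.cells →
        (i, j₂) ∈ lam.cells \ μ.cells → False := by
      intro i j₁ j₂ hj h1 h2
      simp only [Finset.mem_sdiff, mem_cells] at h1 h2
      have hl : (i, j₁ + 1) ∈ lam := lam.up_left_mem le_rfl hj h2.1
      have : i < μ.colLen j₁ := lt_of_lt_of_le (mem_iff_lt_colLen.1 hl) (h j₁)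
      exact h1.2 (mem_iff_lt_colLen.2 this)
    rintro ⟨i₁, j₁⟩ h1 ⟨i₂, j₂⟩ h2 (heq : i₁ = i₂)
    subst heq
    rcases lt_trichotomy j₁ j₂ with hj | hj | hj
    · exact absurd (key _ _ _ hj h1 h2) not_false
    · rw [hj]
    · exact absurd (key _ _ _ hj h2 h1) not_false

lemma card_sdiff_eq_sum {μ lam : YoungDiagram} (hle : μ ≤ lam) :
    (lam.cells \ μ.cells).card
      = ∑ j ∈ Finset.range (lam.rowLen 0), (lam.colLen j - μ.colLen j) := by
  have hsub : μ.cells ⊆ lam.cells := cells_subset_iff.2 hle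
  rw [Finset.card_sdiff_of_subset hsub, card_cells_eq lam le_rfl,
    card_cells_eq μ (rowLen_mono' hle 0)]
  have h2 : (∑ j ∈ Finset.range (lam.rowLen 0), μ.colLen j)
      + ∑ j ∈ Finset.range (lam.rowLen 0), (lam.colLen j - μ.colLen j)
      = ∑ j ∈ Finset.range (lam.rowLen 0), lam.colLen j := by
    rw [← Finset.sum_add_distrib]
    exact Finset.sum_congr rfl fun j _ => Nat.add_sub_cancel' (colLen_mono' hle j)
  omega

lemma mem_S_iff {μ lam : YoungDiagram} {k : ℕ} :
    (μ ≤ lam ∧ μ.HasEvenColumns ∧ IsVerticalStrip μ lam k) ↔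
      ((∀ j, μ.colLen j ≤ lam.colLen j) ∧ (∀ j, Even (μ.colLen j)) ∧
       (∀ j, lam.colLen (j + 1) ≤ μ.colLen j) ∧
       ∑ j ∈ Finset.range (lam.rowLen 0), (lam.colLen j - μ.colLen j) = k) := by
  constructor
  · rintro ⟨hle, hev, _, hcard, hrow⟩
    exact ⟨colLen_mono' hle, hev, noTwo_iff.1 hrow,
      (card_sdiff_eq_sum hle).symm.trans hcard⟩
  · rintro ⟨h1, h2, h3, h4⟩
    have hle : μ ≤ lam := le_of_colLen_le h1
    exact ⟨hle, h2, hle, (card_sdiff_eq_sum hle).trans h4, noTwo_iff.2 h3⟩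

/-- Young diagram cut out of `lam` by a column-length bound function. -/
def mkCol (lam : YoungDiagram) (c : ℕ → ℕ) (hc : ∀ j, c (j + 1) ≤ c j) : YoungDiagram where
  cells := lam.cells.filter (fun p => p.1 < c p.2)
  isLowerSet := by
    have hanti : Antitone c := antitone_nat_of_succ_le hc
    rintro ⟨i₁, j₁⟩ ⟨i₂, j₂⟩ ⟨(hi : i₂ ≤ i₁), (hj : j₂ ≤ j₁)⟩ hmem
    simp only [Finset.coe_filter, Set.mem_setOf_eq, mem_cells] at hmem ⊢
    exact ⟨lam.up_left_mem hi hj hmem.1, lt_of_le_of_lt hi (lt_of_lt_of_le hmem.2 (hanti hj))⟩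

lemma mem_mkCol {lam : YoungDiagram} {c : ℕ → ℕ} {hc : ∀ j, c (j + 1) ≤ c j} {i j : ℕ} :
    (i, j) ∈ mkCol lam c hc ↔ (i, j) ∈ lam ∧ i < c j := by
  change (i, j) ∈ (mkCol lam c hc).cells ↔ _
  simp [mkCol, mem_cells]

lemma colLen_mkCol {lam : YoungDiagram} {c : ℕ → ℕ} {hc : ∀ j, c (j + 1) ≤ c j}
    (hle : ∀ j, c j ≤ lam.colLen j) (j : ℕ) : (mkCol lam c hc).colLen j = c j := by
  refine eq_of_forall_lt_iff fun i => ?_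
  rw [← mem_iff_lt_colLen, mem_mkCol]
  constructor
  · rintro ⟨_, h⟩; exact h
  · intro h; exact ⟨mem_iff_lt_colLen.2 (lt_of_lt_of_le h (hle j)), h⟩

/-- telescoping sum for an antitone function -/
lemma tele_sum {f : ℕ → ℕ} (hf : ∀ j, f (j + 1) ≤ f j) (N : ℕ) :
    ∑ j ∈ Finset.range N, (f j - f (j + 1)) = f 0 - f N := by
  induction N with
  | zero => simp
  | succ n ih =>
    rw [Finset.sum_range_succ, ih]
    have h1 : f (n + 1) ≤ f n := hf n
    have h2 : f n ≤ f 0 := (antitone_nat_of_succ_le hf) (Nat.zero_le n)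
    omega

/-- The key reflection: given a valid subdiagram for `k`, produce one for
`ht + ht % 2 - k`, with explicitly known column lengths. -/
lemma reflect_exists {lam μ : YoungDiagram} {k : ℕ}
    (h : μ ≤ lam ∧ μ.HasEvenColumns ∧ IsVerticalStrip μ lam k) :
    ∃ ν : YoungDiagram,
      (ν ≤ lam ∧ ν.HasEvenColumns ∧ IsVerticalStrip ν lam (lam.ht + lam.ht % 2 - k)) ∧
      ∀ j, ν.colLen j
        = 2 * ((lam.colLen (j + 1) + 1) / 2) + (2 * (lam.colLen j / 2) - μ.colLen j) := by
  rw [mem_S_iff] at h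
  obtain ⟨h1, h2, h3, h4⟩ := h
  have hcm : ∀ j, μ.colLen j % 2 = 0 := fun j => Nat.even_iff.1 (h2 j)
  have dmono : ∀ j, lam.colLen (j + 1) ≤ lam.colLen j :=
    fun j => lam.colLen_anti j (j + 1) (Nat.le_succ j)
  set rc : ℕ → ℕ := fun j =>
    2 * ((lam.colLen (j + 1) + 1) / 2) + (2 * (lam.colLen j / 2) - μ.colLen j) with hrc
  have hrc_anti : ∀ j, rc (j + 1) ≤ rc j := by
    intro j
    have := h1 j; have := h1 (j + 1); have := h3 j; have := h3 (j + 1)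
    have := hcm j; have := hcm (j + 1); have := dmono j; have := dmono (j + 1)
    simp only [hrc]
    omega
  have hrc_le : ∀ j, rc j ≤ lam.colLen j := by
    intro j
    have := h1 j; have := h3 j; have := hcm j; have := dmono j
    simp only [hrc]
    omega
  refine ⟨mkCol lam rc hrc_anti, ?_, ?_⟩
  · rw [mem_S_iff]
    have hcl : ∀ j, (mkCol lam rc hrc_anti).colLen j = rc j := colLen_mkCol hrc_le
    refine ⟨fun j => (hcl j).le.trans (hrc_le j), ?_, ?_, ?_⟩
    · intro j
      rw [hcl j, Nat.even_iff]
      have := h1 j; have := h3 j; have := hcm j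
      simp only [hrc]
      omega
    · intro j
      rw [hcl j]
      have := h1 j; have := h3 j; have := hcm j; have := dmono j
      simp only [hrc]
      omega
    · -- the sum computation
      set f : ℕ → ℕ := fun j => lam.colLen j + lam.colLen j % 2 with hf
      have hfa : ∀ j, f (j + 1) ≤ f j := by
        intro j; have := dmono j; simp only [hf]; omega
      have hterm : ∀ j ∈ Finset.range (lam.rowLen 0),
          (lam.colLen j - μ.colLen j) + (lam.colLen j - rc j) = f j - f (j + 1) := by
        intro j _
        have := h1 j; have := h3 j; have := hcm j; have := dmono j
        simp only [hrc, hf]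
        omega
      have hsum : (∑ j ∈ Finset.range (lam.rowLen 0), (lam.colLen j - μ.colLen j))
          + ∑ j ∈ Finset.range (lam.rowLen 0), (lam.colLen j - rc j)
          = f 0 - f (lam.rowLen 0) := by
        rw [← Finset.sum_add_distrib, Finset.sum_congr rfl hterm, tele_sum hfa]
      have hdN : lam.colLen (lam.rowLen 0) = 0 := colLen_eq_zero' lam le_rfl
      have hfN : f (lam.rowLen 0) = 0 := by simp only [hf]; omega
      have hgoal : ∑ j ∈ Finset.range (lam.rowLen 0), (lam.colLen j - rc j)
          = f 0 - k := by omega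
      have hcongr : ∀ j ∈ Finset.range (lam.rowLen 0),
          lam.colLen j - (mkCol lam rc hrc_anti).colLen j = lam.colLen j - rc j := by
        intro j _; rw [hcl j]
      rw [Finset.sum_congr rfl hcongr, hgoal]
      have hht0 : lam.ht = lam.colLen 0 := rfl
      have hf0 : f 0 = lam.colLen 0 + lam.colLen 0 % 2 := rfl
      omega
  · exact colLen_mkCol hrc_le

instance finite_S (lam : YoungDiagram) (k : ℕ) :
    Finite {μ : YoungDiagram // μ ≤ lam ∧ μ.HasEvenColumns ∧ IsVerticalStrip μ lam k} := by
  have h : Finite {μ : YoungDiagram // μ ≤ lam} := by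
    apply Finite.of_injective
      (fun μ => (⟨μ.1.cells, Finset.mem_powerset.2 (cells_subset_iff.2 μ.2)⟩ :
        {s // s ∈ lam.cells.powerset}))
    intro a b hab
    apply Subtype.ext
    have h := congrArg Subtype.val hab
    simp only at h
    exact le_antisymm (cells_subset_iff.1 h.le) (cells_subset_iff.1 h.ge)
  apply Finite.of_injective (fun μ : {μ : YoungDiagram // μ ≤ lam ∧ μ.HasEvenColumns ∧
      IsVerticalStrip μ lam k} => (⟨μ.1, μ.2.1⟩ : {μ : YoungDiagram // μ ≤ lam}))
  intro a b hab
  simp only [Subtype.mk.injEq] at hab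
  exact Subtype.ext hab

lemma mult_le_reflect (lam : YoungDiagram) (k : ℕ) :
    lam.mult k ≤ lam.mult (lam.ht + lam.ht % 2 - k) := by
  apply Nat.card_le_card_of_injective
    (fun μ : {μ : YoungDiagram // μ ≤ lam ∧ μ.HasEvenColumns ∧ IsVerticalStrip μ lam k} =>
      (⟨Classical.choose (reflect_exists μ.2), (Classical.choose_spec (reflect_exists μ.2)).1⟩ :
        {ν : YoungDiagram // ν ≤ lam ∧ ν.HasEvenColumns ∧
          IsVerticalStrip ν lam (lam.ht + lam.ht % 2 - k)}))
  intro a b hab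
  have hcol := congrArg (fun x => (Subtype.val x).colLen) hab
  have ha := (Classical.choose_spec (reflect_exists a.2)).2
  have hb := (Classical.choose_spec (reflect_exists b.2)).2
  have hA := mem_S_iff.1 a.2
  have hB := mem_S_iff.1 b.2
  apply Subtype.ext
  apply eq_of_colLen_eq
  intro j
  have heq : (Classical.choose (reflect_exists a.2)).colLen j
      = (Classical.choose (reflect_exists b.2)).colLen j := congrFun hcol j
  rw [ha j, hb j] at heq
  have h1a := hA.1 j; have h3a := hA.2.2.1 j
  have h1b := hB.1 j; have h3b := hB.2.2.1 j
  have hea := Nat.even_iff.1 (hA.2.1 j)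
  have heb := Nat.even_iff.1 (hB.2.1 j)
  omega

end YoungDiagram

/-- if `ht lam = 2n - 1` or `ht lam = 2n`, then
`mult lam (2n - i) = mult lam i` for `0 ≤ i ≤ n`. -/
theorem mult_symm_at_height (n i : ℕ) (hn : 1 ≤ n) (hi : i ≤ n) (lam : YoungDiagram)
    (hht : lam.ht = 2 * n - 1 ∨ lam.ht = 2 * n) :
    lam.mult (2 * n - i) = lam.mult i := by
  have hT : lam.ht + lam.ht % 2 = 2 * n := by omega
  have key : ∀ k, lam.mult k ≤ lam.mult (2 * n - k) := by
    intro k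
    have := YoungDiagram.mult_le_reflect lam k
    rwa [hT] at this
  have e1 : 2 * n - (2 * n - i) = i := by omega
  have h1 := key (2 * n - i)
  rw [e1] at h1
  exact le_antisymm h1 (key i)
end

section
/- Let n ≥ 1 and let 0 ≤ i ≤ n be integers. If λ is a mildly odd Young diagram with ht(λ) > 2n, then mult(λ, 2n − i) ≥ mult(λ, i). -/
open scoped Classical

namespace MultAux

open YoungDiagram

lemma abstract_mono (C : ℕ → ℕ) (K : ℕ)
    (hstep : ∀ m, 2 * m < K → C m ≤ C (m + 1))
    (hsymm : ∀ m, m ≤ K → C (K - m) = C m) :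
    ∀ m m', m ≤ m' → m + m' ≤ K → C m ≤ C m' := by
  have claim : ∀ d m, 2 * (m + d) ≤ K → C m ≤ C (m + d) := by
    intro d
    induction d with
    | zero => intro m _; simp
    | succ d ih =>
      intro m h
      have h1 : C m ≤ C (m + d) := ih m (by omega)
      have h2 : C (m + d) ≤ C (m + d + 1) := hstep _ (by omega)
      have : m + (d + 1) = m + d + 1 := by omega
      rw [this]
      exact h1.trans h2
  intro m m' hle hsum
  by_cases h : 2 * m' ≤ K
  · have := claim (m' - m) m (by omega)
    rwa [show m + (m' - m) = m' by omega] at this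
  · have h1 : C (K - m') = C m' := hsymm m' (by omega)
    have h2 := claim (K - m' - m) m (by omega)
    rw [show m + (K - m' - m) = K - m' by omega] at h2
    exact h2.trans (le_of_eq h1)

lemma finite_aux (w : ℕ) (A : ℕ → ℕ) (p : (Fin w → ℕ) → Prop) :
    Finite {y : Fin w → ℕ // (∀ j, y j ≤ A j) ∧ p y} := by
  apply Finite.of_injective
    (fun y => (fun j : Fin w => (⟨y.1 j, Nat.lt_succ_of_le (y.2.1 j)⟩ : Fin (A j + 1))))
  intro a b hab
  apply Subtype.ext; funext j
  exact congrArg Fin.val (congrFun hab j)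

def T (w : ℕ) (A : ℕ → ℕ) (m : ℕ) : Type :=
  {y : Fin w → ℕ // (∀ j, y j ≤ A j) ∧ ∑ j, y j = m}

instance (w : ℕ) (A : ℕ → ℕ) (m : ℕ) : Finite (T w A m) := finite_aux w A _

noncomputable def cardT (w : ℕ) (A : ℕ → ℕ) (m : ℕ) : ℕ := Nat.card (T w A m)

lemma card_vanish (w : ℕ) (A : ℕ → ℕ) (m : ℕ) (h : ∑ j ∈ Finset.range w, A j < m) :
    cardT w A m = 0 := by
  have : IsEmpty (T w A m) := by
    constructor
    rintro ⟨y, hy, hsum⟩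
    have h1 : ∑ j : Fin w, y j ≤ ∑ j : Fin w, A j :=
      Finset.sum_le_sum fun j _ => hy j
    rw [hsum, Fin.sum_univ_eq_sum_range (fun j => A j) w] at h1
    omega
  exact Nat.card_of_isEmpty

lemma card_symm (w : ℕ) (A : ℕ → ℕ) (m : ℕ) (h : m ≤ ∑ j ∈ Finset.range w, A j) :
    cardT w A (∑ j ∈ Finset.range w, A j - m) = cardT w A m := by
  apply Nat.card_congr
  have key : ∀ (m' : ℕ) (y : Fin w → ℕ), (∀ j, y j ≤ A j) → (∑ j, y j = m') →
      ∑ j : Fin w, (A j - y j) = ∑ j ∈ Finset.range w, A j - m' := by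
    intro m' y hy hs
    rw [Finset.sum_tsub_distrib _ (fun j _ => hy j), hs,
      Fin.sum_univ_eq_sum_range (fun j => A j) w]
  refine ⟨fun y => ⟨fun j => A j - y.1 j, fun j => Nat.sub_le _ _, ?_⟩,
    fun y => ⟨fun j => A j - y.1 j, fun j => Nat.sub_le _ _, ?_⟩, ?_, ?_⟩
  · have := key _ y.1 y.2.1 y.2.2
    rw [this]
    omega
  · exact key _ y.1 y.2.1 y.2.2
  · intro y
    apply Subtype.ext; funext j
    simp only
    have := y.2.1 j
    omega
  · intro y
    apply Subtype.ext; funext j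
    simp only
    have := y.2.1 j
    omega

lemma card_rec (w : ℕ) (A : ℕ → ℕ) (m : ℕ) :
    cardT (w + 1) A m = ∑ x ∈ Finset.range (A 0 + 1),
      if x ≤ m then cardT w (fun j => A (j + 1)) (m - x) else 0 := by
  set A' : ℕ → ℕ := fun j => A (j + 1) with hA'
  set F : ℕ → Type := fun x =>
    {y : Fin w → ℕ // (∀ j, y j ≤ A' j) ∧ x + ∑ j, y j = m} with hF
  haveI : ∀ x, Finite (F x) := fun x => finite_aux w A' _
  have e : T (w + 1) A m ≃ Σ x : Fin (A 0 + 1), F x.val := by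
    refine ⟨fun y => ⟨⟨y.1 0, Nat.lt_succ_of_le (y.2.1 0)⟩,
        fun j => y.1 j.succ, fun j => ?_, ?_⟩,
      fun p => ⟨Fin.cons p.1.val p.2.1, ?_, ?_⟩, ?_, ?_⟩
    · have := y.2.1 j.succ
      simpa using this
    · have := y.2.2
      rw [Fin.sum_univ_succ] at this
      exact this
    · intro j
      refine Fin.cases ?_ ?_ j
      · simpa using Nat.lt_succ_iff.mp p.1.isLt
      · intro j'
        have := p.2.2.1 j'
        simpa using this
    · rw [Fin.sum_univ_succ]
      simp only [Fin.cons_zero, Fin.cons_succ]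
      exact p.2.2.2
    · intro y
      apply Subtype.ext
      exact Fin.cons_self_tail y.1
    · rintro ⟨x, y⟩
      refine Sigma.ext ?_ ?_
      · simp [Fin.ext_iff]
      · apply heq_of_eq
        apply Subtype.ext
        funext j
        simp [Fin.cons_succ]
  rw [cardT, Nat.card_congr e]
  haveI : ∀ x : Fin (A 0 + 1), Fintype (F x.val) := fun x => Fintype.ofFinite _
  rw [Nat.card_eq_fintype_card, Fintype.card_sigma]
  have step : ∀ x : ℕ, Nat.card (F x) = if x ≤ m then cardT w A' (m - x) else 0 := by
    intro x
    by_cases hx : x ≤ m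
    · rw [if_pos hx]
      apply Nat.card_congr
      apply Equiv.subtypeEquivRight
      intro y
      constructor
      · rintro ⟨h1, h2⟩; exact ⟨h1, by omega⟩
      · rintro ⟨h1, h2⟩; exact ⟨h1, by omega⟩
    · rw [if_neg hx]
      have : IsEmpty (F x) := by
        constructor
        rintro ⟨y, hy, hs⟩
        omega
      exact Nat.card_of_isEmpty
  calc (∑ x : Fin (A 0 + 1), Fintype.card (F x.val))
      = ∑ x : Fin (A 0 + 1), Nat.card (F x.val) := by
        apply Finset.sum_congr rfl
        intro x _
        rw [Nat.card_eq_fintype_card]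
    _ = ∑ x ∈ Finset.range (A 0 + 1), Nat.card (F x) :=
        Fin.sum_univ_eq_sum_range (fun x => Nat.card (F x)) (A 0 + 1)
    _ = _ := by
        apply Finset.sum_congr rfl
        intro x _
        exact step x

lemma card_step : ∀ (w : ℕ) (A : ℕ → ℕ) (m : ℕ),
    2 * m < ∑ j ∈ Finset.range w, A j → cardT w A m ≤ cardT w A (m + 1) := by
  intro w
  induction w with
  | zero => intro A m h; simp at h
  | succ w ih =>
    intro A m h
    have hsum : ∑ j ∈ Finset.range (w + 1), A j
        = A 0 + ∑ j ∈ Finset.range w, A (j + 1) := by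
      rw [Finset.sum_range_succ']
      omega
    set C : ℕ → ℕ := cardT w (fun j => A (j + 1)) with hC
    set K' : ℕ := ∑ j ∈ Finset.range w, A (j + 1) with hK'
    have mono := abstract_mono C K' (fun m' hm' => ih (fun j => A (j + 1)) m' hm')
      (fun m' hm' => card_symm w (fun j => A (j + 1)) m' hm')
    rw [card_rec, card_rec]
    have hL : ∑ x ∈ Finset.range (A 0 + 1), (if x ≤ m then C (m - x) else 0)
        = (∑ x ∈ Finset.range (A 0), if x ≤ m then C (m - x) else 0)
          + (if A 0 ≤ m then C (m - A 0) else 0) :=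
      Finset.sum_range_succ _ (A 0)
    have hR : ∑ x ∈ Finset.range (A 0 + 1), (if x ≤ m + 1 then C (m + 1 - x) else 0)
        = (∑ x ∈ Finset.range (A 0), if x ≤ m then C (m - x) else 0) + C (m + 1) := by
      rw [Finset.sum_range_succ' (fun x => if x ≤ m + 1 then C (m + 1 - x) else 0) (A 0)]
      have e1 : ∀ x ∈ Finset.range (A 0), (if x + 1 ≤ m + 1 then C (m + 1 - (x + 1)) else 0)
          = (if x ≤ m then C (m - x) else 0) := by
        intro x _
        have h2 : m + 1 - (x + 1) = m - x := by omega
        exact if_congr (by omega) (by rw [h2]) rfl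
      rw [Finset.sum_congr rfl e1]
      simp
    rw [hL, hR]
    apply Nat.add_le_add_left
    by_cases hc : A 0 ≤ m
    · rw [if_pos hc]
      apply mono (m - A 0) (m + 1) (by omega)
      omega
    · rw [if_neg hc]
      exact Nat.zero_le _


lemma le_iff_colLen {μ lam : YoungDiagram} :
    μ ≤ lam ↔ ∀ j, μ.colLen j ≤ lam.colLen j := by
  constructor
  · intro h j
    by_contra hc
    push_neg at hc
    have h1 : (lam.colLen j, j) ∈ μ := mem_iff_lt_colLen.mpr hc
    have h2 : (lam.colLen j, j) ∈ lam := h h1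
    rw [mem_iff_lt_colLen] at h2
    omega
  · intro h
    rw [← cells_subset_iff]
    intro x hx
    obtain ⟨i, j⟩ := x
    rw [mem_cells, mem_iff_lt_colLen] at hx
    rw [mem_cells, mem_iff_lt_colLen]
    exact lt_of_lt_of_le hx (h j)

lemma colLen_eq_of {μ : YoungDiagram} {j a : ℕ} (h : ∀ i, (i, j) ∈ μ ↔ i < a) :
    μ.colLen j = a := by
  rcases Nat.lt_trichotomy (μ.colLen j) a with hc | hc | hc
  · have := (h (μ.colLen j)).2 hc
    rw [mem_iff_lt_colLen] at this
    omega
  · exact hc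
  · have := (h a).1 (mem_iff_lt_colLen.mpr hc)
    omega

lemma snd_lt_width {lam : YoungDiagram} {x : ℕ × ℕ} (hx : x ∈ lam) :
    x.2 < lam.rowLen 0 := by
  obtain ⟨i, j⟩ := x
  have h1 : j < lam.rowLen i := mem_iff_lt_rowLen.mp hx
  have h2 : lam.rowLen i ≤ lam.rowLen 0 := lam.rowLen_anti 0 i (Nat.zero_le _)
  omega

lemma sdiff_card {μ lam : YoungDiagram} (h : μ ≤ lam) :
    (lam.cells \ μ.cells).card
      = ∑ j ∈ Finset.range (lam.rowLen 0), (lam.colLen j - μ.colLen j) := by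
  have hcover : lam.cells \ μ.cells
      = (Finset.range (lam.rowLen 0)).biUnion (fun j => lam.col j \ μ.col j) := by
    ext x
    simp only [Finset.mem_sdiff, Finset.mem_biUnion, Finset.mem_range, mem_col_iff, mem_cells]
    constructor
    · rintro ⟨h1, h2⟩
      exact ⟨x.2, snd_lt_width h1, ⟨h1, rfl⟩, fun hc => h2 hc.1⟩
    · rintro ⟨j, _, ⟨h1, rfl⟩, h2⟩
      exact ⟨h1, fun hc => h2 ⟨hc, rfl⟩⟩
  rw [hcover, Finset.card_biUnion]
  · apply Finset.sum_congr rfl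
    intro j _
    have hsub : μ.col j ⊆ lam.col j := by
      intro x hx
      rw [mem_col_iff] at hx ⊢
      exact ⟨h hx.1, hx.2⟩
    rw [Finset.card_sdiff_of_subset hsub, ← colLen_eq_card, ← colLen_eq_card]
  · intro j1 _ j2 _ hne
    simp only [Finset.disjoint_left]
    intro x hx1 hx2
    rw [Finset.mem_sdiff, mem_col_iff] at hx1 hx2
    exact hne (hx1.1.2 ▸ hx2.1.2.symm ▸ rfl)

lemma strip_rows_iff {μ lam : YoungDiagram} :
    (∀ c₁ ∈ lam.cells \ μ.cells, ∀ c₂ ∈ lam.cells \ μ.cells, c₁.1 = c₂.1 → c₁ = c₂)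
      ↔ ∀ j, lam.colLen (j + 1) ≤ μ.colLen j := by
  constructor
  · intro h j
    by_contra hc
    push_neg at hc
    set i := lam.colLen (j + 1) - 1 with hi
    have hpos : 0 < lam.colLen (j + 1) := by omega
    have hmem2 : (i, j + 1) ∈ lam := mem_iff_lt_colLen.mpr (by omega)
    have hnm2 : (i, j + 1) ∉ μ := by
      rw [mem_iff_lt_colLen]
      have := μ.colLen_anti j (j + 1) (by omega)
      omega
    have hmem1 : (i, j) ∈ lam := by
      rw [mem_iff_lt_colLen]
      have := lam.colLen_anti j (j + 1) (by omega)
      omega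
    have hnm1 : (i, j) ∉ μ := by
      rw [mem_iff_lt_colLen]
      omega
    have := h (i, j) (by simp [Finset.mem_sdiff, hmem1, hnm1])
      (i, j + 1) (by simp [Finset.mem_sdiff, hmem2, hnm2]) rfl
    simp at this
  · intro h c₁ hc₁ c₂ hc₂ hrow
    obtain ⟨i₁, j₁⟩ := c₁
    obtain ⟨i₂, j₂⟩ := c₂
    simp only at hrow
    subst hrow
    rw [Finset.mem_sdiff, mem_cells, mem_cells, mem_iff_lt_colLen, mem_iff_lt_colLen] at hc₁ hc₂
    rcases Nat.lt_trichotomy j₁ j₂ with hj | hj | hj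
    · exfalso
      have h1 : lam.colLen j₂ ≤ lam.colLen (j₁ + 1) := lam.colLen_anti _ _ (by omega)
      have h3 := h j₁
      omega
    · simp [hj]
    · exfalso
      have h1 : lam.colLen j₁ ≤ lam.colLen (j₂ + 1) := lam.colLen_anti _ _ (by omega)
      have h3 := h j₂
      omega


lemma valid_iff {lam : YoungDiagram} (μ : YoungDiagram) (k : ℕ) :
    (μ ≤ lam ∧ μ.HasEvenColumns ∧ IsVerticalStrip μ lam k)
      ↔ ((∀ j, μ.colLen j % 2 = 0) ∧ (∀ j, lam.colLen (j + 1) ≤ μ.colLen j)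
          ∧ (∀ j, μ.colLen j ≤ lam.colLen j)
          ∧ ∑ j ∈ Finset.range (lam.rowLen 0), (lam.colLen j - μ.colLen j) = k) := by
  constructor
  · rintro ⟨hle, hec, _, hcard, hrows⟩
    refine ⟨fun j => Nat.even_iff.mp (hec j), strip_rows_iff.mp hrows,
      le_iff_colLen.mp hle, ?_⟩
    rw [← sdiff_card hle]
    exact hcard
  · rintro ⟨h1, h2, h3, h4⟩
    have hle : μ ≤ lam := le_iff_colLen.mpr h3
    exact ⟨hle, fun j => Nat.even_iff.mpr (h1 j),
      hle, by rw [sdiff_card hle]; exact h4, strip_rows_iff.mpr h2⟩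

/-! ### data attached to `lam` -/

def lo (lam : YoungDiagram) (j : ℕ) : ℕ := lam.colLen (j + 1) + lam.colLen (j + 1) % 2
def AA (lam : YoungDiagram) (j : ℕ) : ℕ :=
  (lam.colLen j - lam.colLen j % 2 - lo lam j) / 2
def DD (lam : YoungDiagram) : ℕ :=
  ∑ j ∈ Finset.range (lam.rowLen 0), (lam.colLen j - lo lam j)

lemma czero (lam : YoungDiagram) (j : ℕ) (h : lam.rowLen 0 ≤ j) : lam.colLen j = 0 := by
  by_contra hc
  have h1 : (0, j) ∈ lam := mem_iff_lt_colLen.mpr (by omega)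
  have h2 : j < lam.rowLen 0 := by
    have := mem_iff_lt_rowLen.mp h1
    have h3 := lam.rowLen_anti 0 0 (le_refl 0)
    omega
  omega

lemma odd_lt (lam : YoungDiagram) (hmo : lam.MildlyOdd) (j : ℕ)
    (h : lam.colLen j % 2 = 1) : lam.colLen (j + 1) < lam.colLen j := by
  have h1 := lam.colLen_anti j (j + 1) (by omega)
  rcases Nat.lt_or_ge (lam.colLen (j + 1)) (lam.colLen j) with hc | hc
  · exact hc
  · exfalso
    have heq : lam.colLen (j + 1) = lam.colLen j := by omega
    have := hmo (lam.colLen j) (Nat.odd_iff.mpr h) j (j + 1) rfl heq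
    omega

lemma lo_le_even (lam : YoungDiagram) (hmo : lam.MildlyOdd) (j : ℕ) :
    lo lam j ≤ lam.colLen j - lam.colLen j % 2 := by
  have h1 := lam.colLen_anti j (j + 1) (by omega)
  have h2 := odd_lt lam hmo j
  unfold lo
  omega

lemma DD_eq (lam : YoungDiagram) (hmo : lam.MildlyOdd) :
    DD lam = (∑ j ∈ Finset.range (lam.rowLen 0), lam.colLen j % 2)
      + 2 * ∑ j ∈ Finset.range (lam.rowLen 0), AA lam j := by
  rw [Finset.mul_sum, ← Finset.sum_add_distrib]
  apply Finset.sum_congr rfl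
  intro j _
  have h1 := lo_le_even lam hmo j
  have h2 := lam.colLen_anti j (j + 1) (by omega)
  unfold AA lo at *
  omega

lemma telesc (F : ℕ → ℕ) (hF : ∀ j, F (j + 1) ≤ F j) (w : ℕ) :
    ∑ j ∈ Finset.range w, (F j - F (j + 1)) = F 0 - F w := by
  have hmono : ∀ j, F j ≤ F 0 := by
    intro j
    induction j with
    | zero => exact le_refl _
    | succ j ih => exact le_trans (hF j) ih
  induction w with
  | zero => simp
  | succ w ih =>
    rw [Finset.sum_range_succ, ih]
    have := hF w
    have := hmono w
    omega

lemma DD_add (lam : YoungDiagram) (hmo : lam.MildlyOdd) :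
    DD lam + ∑ j ∈ Finset.range (lam.rowLen 0), lam.colLen j % 2
      = lam.colLen 0 + lam.colLen 0 % 2 := by
  set w := lam.rowLen 0 with hw
  set F : ℕ → ℕ := fun j => lam.colLen j + lam.colLen j % 2 with hF
  have hFa : ∀ j, F (j + 1) ≤ F j := by
    intro j
    have h1 := lam.colLen_anti j (j + 1) (by omega)
    simp only [hF]
    omega
  have key : DD lam + ∑ j ∈ Finset.range w, lam.colLen j % 2
      = ∑ j ∈ Finset.range w, (F j - F (j + 1)) := by
    rw [DD, ← Finset.sum_add_distrib]
    apply Finset.sum_congr rfl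
    intro j _
    have h1 := lo_le_even lam hmo j
    have h2 := lam.colLen_anti j (j + 1) (by omega)
    simp only [hF]
    unfold lo at *
    omega
  rw [key, telesc F hFa w]
  have hcw : lam.colLen w = 0 := czero lam w (le_refl _)
  simp only [hF]
  omega

/-! ### the subdiagram attached to a column-length function -/

def sub (lam : YoungDiagram) (g : ℕ → ℕ) (hg1 : ∀ j, lam.colLen (j + 1) ≤ g j)
    (hg2 : ∀ j, g j ≤ lam.colLen j) : YoungDiagram where
  cells := lam.cells.filter (fun x => x.1 < g x.2)
  isLowerSet := by
    have hanti : ∀ j1 j2, j1 ≤ j2 → g j2 ≤ g j1 := by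
      intro j1 j2 h
      induction j2, h using Nat.le_induction with
      | base => exact le_refl _
      | succ j2 hj ih =>
        exact le_trans (le_trans (hg2 (j2 + 1)) (le_trans (le_refl _) (hg1 j2))) ih
    intro x y hxy hy
    simp only [Finset.coe_filter, Set.mem_setOf_eq, Finset.mem_coe, mem_cells] at hy ⊢
    obtain ⟨h1, h2⟩ := hy
    obtain ⟨ha, hb⟩ := Prod.le_def.mp hxy
    refine ⟨lam.isLowerSet hxy h1, ?_⟩
    have := hanti y.2 x.2 hb
    omega

lemma colLen_sub (lam : YoungDiagram) (g : ℕ → ℕ) (hg1 : ∀ j, lam.colLen (j + 1) ≤ g j)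
    (hg2 : ∀ j, g j ≤ lam.colLen j) (j : ℕ) :
    (sub lam g hg1 hg2).colLen j = g j := by
  apply colLen_eq_of
  intro i
  constructor
  · intro h
    have : (i, j) ∈ (sub lam g hg1 hg2).cells := h
    simp only [sub, Finset.mem_filter] at this
    exact this.2
  · intro h
    show (i, j) ∈ (sub lam g hg1 hg2).cells
    simp only [sub, Finset.mem_filter]
    exact ⟨mem_cells _ |>.mpr (mem_iff_lt_colLen.mpr (lt_of_lt_of_le h (hg2 j))), h⟩

lemma eq_of_colLen {μ ν : YoungDiagram} (h : ∀ j, μ.colLen j = ν.colLen j) : μ = ν :=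
  le_antisymm (le_iff_colLen.mpr fun j => (h j).le) (le_iff_colLen.mpr fun j => (h j).ge)


def gfun (lam : YoungDiagram) (y : Fin (lam.rowLen 0) → ℕ) : ℕ → ℕ := fun j =>
  if h : j < lam.rowLen 0 then lo lam j + 2 * y ⟨j, h⟩ else 0

lemma gfun_ge (lam : YoungDiagram) (y : Fin (lam.rowLen 0) → ℕ) (j : ℕ) :
    lam.colLen (j + 1) ≤ gfun lam y j := by
  unfold gfun
  by_cases h : j < lam.rowLen 0
  · rw [dif_pos h]
    unfold lo
    omega
  · rw [dif_neg h]
    have := czero lam (j + 1) (by omega)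
    omega

lemma gfun_le (lam : YoungDiagram) (hmo : lam.MildlyOdd) (y : Fin (lam.rowLen 0) → ℕ)
    (hy : ∀ j, y j ≤ AA lam j) (j : ℕ) : gfun lam y j ≤ lam.colLen j := by
  unfold gfun
  by_cases h : j < lam.rowLen 0
  · rw [dif_pos h]
    have h1 : y ⟨j, h⟩ ≤ AA lam j := hy ⟨j, h⟩
    have h2 := lo_le_even lam hmo j
    unfold AA at h1
    unfold lo at *
    omega
  · rw [dif_neg h]
    omega

lemma mult_eq (lam : YoungDiagram) (hmo : lam.MildlyOdd) (k : ℕ) :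
    lam.mult k = Nat.card {y : Fin (lam.rowLen 0) → ℕ //
      (∀ j, y j ≤ AA lam j) ∧ k + 2 * ∑ j, y j = DD lam} := by
  apply Nat.card_congr
  refine ⟨fun μp => ⟨fun j => (μp.1.colLen j.val - lo lam j.val) / 2, ?_, ?_⟩,
      fun y => ⟨sub lam (gfun lam y.1) (gfun_ge lam y.1) (gfun_le lam hmo y.1 y.2.1), ?_⟩,
      ?_, ?_⟩
  · -- bounds
    intro j
    obtain ⟨h1, h2, h3, h4⟩ := (valid_iff μp.1 k).mp μp.2
    show (μp.1.colLen j.val - lo lam j.val) / 2 ≤ AA lam j.val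
    have ha := h1 j.val
    have hb := h2 j.val
    have hc := h3 j.val
    have hd := lo_le_even lam hmo j.val
    unfold AA lo at *
    omega
  · -- sum condition
    obtain ⟨h1, h2, h3, h4⟩ := (valid_iff μp.1 k).mp μp.2
    have hterm : ∀ j : Fin (lam.rowLen 0),
        2 * ((μp.1.colLen j.val - lo lam j.val) / 2)
          = μp.1.colLen j.val - lo lam j.val := by
      intro j
      have ha := h1 j.val
      have hb := h2 j.val
      unfold lo at *
      omega
    rw [Finset.mul_sum]
    rw [Finset.sum_congr rfl (fun j _ => hterm j)]
    rw [Fin.sum_univ_eq_sum_range (fun j => μp.1.colLen j - lo lam j) (lam.rowLen 0)]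
    have e1 : (∑ j ∈ Finset.range (lam.rowLen 0), (lam.colLen j - μp.1.colLen j))
        + ∑ j ∈ Finset.range (lam.rowLen 0), (μp.1.colLen j - lo lam j) = DD lam := by
      rw [← Finset.sum_add_distrib]
      unfold DD
      apply Finset.sum_congr rfl
      intro j _
      have ha := h1 j
      have hb := h2 j
      have hc := h3 j
      unfold lo at *
      omega
    omega
  · -- validity of constructed subdiagram
    refine (valid_iff _ k).mpr ⟨?_, ?_, ?_, ?_⟩
    · intro j
      rw [colLen_sub]
      unfold gfun
      by_cases h : j < lam.rowLen 0
      · rw [dif_pos h]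
        unfold lo
        omega
      · rw [dif_neg h]
    · intro j
      rw [colLen_sub]
      exact gfun_ge lam y.1 j
    · intro j
      rw [colLen_sub]
      exact gfun_le lam hmo y.1 y.2.1 j
    · have hsum : ∀ j ∈ Finset.range (lam.rowLen 0),
          lam.colLen j - (sub lam (gfun lam y.1) (gfun_ge lam y.1)
            (gfun_le lam hmo y.1 y.2.1)).colLen j
          = lam.colLen j - gfun lam y.1 j := by
        intro j _
        rw [colLen_sub]
      rw [Finset.sum_congr rfl hsum]
      rw [← Fin.sum_univ_eq_sum_range (fun j => lam.colLen j - gfun lam y.1 j) (lam.rowLen 0)]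
      have hterm : ∀ j : Fin (lam.rowLen 0),
          lam.colLen j.val - gfun lam y.1 j.val
            = (lam.colLen j.val - lo lam j.val) - 2 * y.1 j := by
        intro j
        unfold gfun
        rw [dif_pos j.isLt, Fin.eta]
        omega
      have hbound : ∀ j : Fin (lam.rowLen 0),
          2 * y.1 j ≤ lam.colLen j.val - lo lam j.val := by
        intro j
        have h1 := y.2.1 j
        have h2 := lo_le_even lam hmo j.val
        unfold AA lo at *
        omega
      rw [Finset.sum_congr rfl (fun j _ => hterm j)]
      rw [Finset.sum_tsub_distrib _ (fun j _ => hbound j)]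
      rw [Fin.sum_univ_eq_sum_range (fun j => lam.colLen j - lo lam j) (lam.rowLen 0)]
      have h5 := y.2.2
      rw [← Finset.mul_sum]
      unfold DD at h5 ⊢
      omega
  · -- left inverse
    intro μp
    apply Subtype.ext
    apply eq_of_colLen
    intro j
    rw [colLen_sub]
    obtain ⟨h1, h2, h3, h4⟩ := (valid_iff μp.1 k).mp μp.2
    unfold gfun
    by_cases h : j < lam.rowLen 0
    · rw [dif_pos h]
      show lo lam j + 2 * ((μp.1.colLen j - lo lam j) / 2) = μp.1.colLen j
      have ha := h1 j
      have hb := h2 j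
      unfold lo at *
      omega
    · rw [dif_neg h]
      have := czero lam j (by omega)
      have := h3 j
      omega
  · -- right inverse
    intro y
    apply Subtype.ext
    funext j
    show ((sub lam (gfun lam y.1) (gfun_ge lam y.1)
      (gfun_le lam hmo y.1 y.2.1)).colLen j.val - lo lam j.val) / 2 = y.1 j
    rw [colLen_sub]
    unfold gfun
    rw [dif_pos j.isLt, Fin.eta]
    omega


lemma card_eq_of_guard (lam : YoungDiagram) (k : ℕ) (hk : k ≤ DD lam)
    (hpar : (DD lam - k) % 2 = 0) :
    Nat.card {y : Fin (lam.rowLen 0) → ℕ //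
      (∀ j, y j ≤ AA lam j) ∧ k + 2 * ∑ j, y j = DD lam}
      = cardT (lam.rowLen 0) (AA lam) ((DD lam - k) / 2) := by
  unfold cardT T
  apply Nat.card_congr
  apply Equiv.subtypeEquivRight
  intro y
  constructor
  · rintro ⟨h1, h2⟩
    exact ⟨h1, by omega⟩
  · rintro ⟨h1, h2⟩
    exact ⟨h1, by omega⟩

end MultAux

/-- if `lam` is mildly odd with `ht lam > 2n`, then
`mult lam (2n - i) ≥ mult lam i` for `0 ≤ i ≤ n`. -/
theorem mult_ge_of_large_height (n i : ℕ) (hn : 1 ≤ n) (hi : i ≤ n) (lam : YoungDiagram)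
    (hmo : lam.MildlyOdd) (hht : 2 * n < lam.ht) :
    lam.mult i ≤ lam.mult (2 * n - i) := by
  classical
  have hht' : 2 * n < lam.colLen 0 := hht
  set w := lam.rowLen 0 with hw
  set D := MultAux.DD lam with hD
  set r := ∑ j ∈ Finset.range w, lam.colLen j % 2 with hr
  set K := ∑ j ∈ Finset.range w, MultAux.AA lam j with hK
  have hDK : D = r + 2 * K := MultAux.DD_eq lam hmo
  have hDr : D + r = lam.colLen 0 + lam.colLen 0 % 2 := MultAux.DD_add lam hmo
  rw [MultAux.mult_eq lam hmo i, MultAux.mult_eq lam hmo (2 * n - i)]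
  by_cases hg : i ≤ D ∧ (D - i) % 2 = 0
  · -- guard holds for i
    obtain ⟨hg1, hg2⟩ := hg
    rw [MultAux.card_eq_of_guard lam i hg1 hg2]
    by_cases hri : r ≤ i
    · -- main case
      have hk1 : 2 * n - i ≤ D := by omega
      have hk2 : (D - (2 * n - i)) % 2 = 0 := by omega
      rw [MultAux.card_eq_of_guard lam (2 * n - i) hk1 hk2]
      have hmono := MultAux.abstract_mono (MultAux.cardT w (MultAux.AA lam)) K
        (MultAux.card_step w (MultAux.AA lam)) (MultAux.card_symm w (MultAux.AA lam))
      have hsymm : MultAux.cardT w (MultAux.AA lam) (K - (D - i) / 2)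
          = MultAux.cardT w (MultAux.AA lam) ((D - i) / 2) :=
        MultAux.card_symm w (MultAux.AA lam) ((D - i) / 2) (by omega)
      calc MultAux.cardT w (MultAux.AA lam) ((D - i) / 2)
          = MultAux.cardT w (MultAux.AA lam) (K - (D - i) / 2) := hsymm.symm
        _ ≤ MultAux.cardT w (MultAux.AA lam) ((D - (2 * n - i)) / 2) :=
            hmono _ _ (by omega) (by omega)
    · -- i < r : left side vanishes
      rw [MultAux.card_vanish w (MultAux.AA lam) ((D - i) / 2) (by omega)]
      exact Nat.zero_le _
  · -- guard fails for i : left side is empty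
    have hempty : IsEmpty {y : Fin w → ℕ //
        (∀ j, y j ≤ MultAux.AA lam j) ∧ i + 2 * ∑ j, y j = D} := by
      constructor
      rintro ⟨y, hy1, hy2⟩
      omega
    rw [Nat.card_of_isEmpty]
    exact Nat.zero_le _
end
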